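/- The 2-color Rado number of the equation x₁² + x₂² + ... + x₁₂² = z² (twelve squares summing to a square) equals 23: every 2-coloring of {1, ..., 23} admits a monochromatic solution, and there exists a 2-coloring of {1, ..., 22} with no monochromatic solution. -/

import Mathlib

/-!
For `N = 23` it suffices to exhibit 36 solutions of `x₁² + ⋯ + x₁₂² = z²` in `{1, …, 23}`, such as
`4 · 1² + 8 · 2² = 6²` and `9 · 2² + 3 · 6² = 12²`, whose value sets, as hyperedges on the 15 values
involved, admit no 2-colouring without a monochromatic edge; an exhaustive search, pruned as soon
as some edge is monochromatic, confirms this. For `N = 22`, colour `{1, 2, 3, 4, 5, 16, 22}` with one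
colour and the rest of `{1, …, 22}` with the other: encoding the sums of twelve squares from each
class as the set bits of a natural number shows that no square of the same class is such a sum.
-/

section MonoEdgeSearch

variable {α κ : Type*} [DecidableEq κ]

def monoUnder (σ : α → Option κ) : List α → Bool
  | [] => false
  | v :: vs => match σ v with
    | none => false
    | some c => vs.all fun w => σ w = some c

theorem exists_mono_of_any_monoUnder {E : List (List α)} {σ : α → Option κ} {χ : α → κ}
    (hσ : ∀ v c, σ v = some c → χ v = c) (h : E.any (monoUnder σ) = true) :
    ∃ e ∈ E, ∃ c, ∀ v ∈ e, χ v = c := by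
  obtain ⟨_ | ⟨v, vs⟩, he, hmono⟩ := List.any_eq_true.1 h
  · cases hmono
  · simp only [monoUnder] at hmono
    split at hmono
    · cases hmono
    · rename_i c hv
      simp only [List.all_eq_true, decide_eq_true_eq] at hmono
      refine ⟨_, he, c, fun w hw => hσ w c ?_⟩
      rcases List.mem_cons.1 hw with rfl | hw
      exacts [hv, hmono w hw]

variable [DecidableEq α]

def searchMonoEdge (E : List (List α)) (cs : List κ) : List α → (α → Option κ) → Bool
  | [], σ => E.any (monoUnder σ)
  | v :: vs, σ => E.any (monoUnder σ) ||
      cs.all fun c => searchMonoEdge E cs vs fun w => if w = v then some c else σ w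

theorem exists_mono_of_searchMonoEdge {E : List (List α)} {cs : List κ} (hcs : ∀ c, c ∈ cs)
    (χ : α → κ) (vs : List α) (σ : α → Option κ) (hσ : ∀ v c, σ v = some c → χ v = c)
    (h : searchMonoEdge E cs vs σ = true) : ∃ e ∈ E, ∃ c, ∀ v ∈ e, χ v = c := by
  induction vs generalizing σ with
  | nil => exact exists_mono_of_any_monoUnder hσ h
  | cons v vs ih =>
    rcases Bool.or_eq_true_iff.1 h with h | h
    · exact exists_mono_of_any_monoUnder hσ h
    · refine ih _ ?_ (List.all_eq_true.1 h (χ v) (hcs _))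
      intro w c hw
      split_ifs at hw with hwv
      · cases hw; exact hwv ▸ rfl
      · exact hσ w c hw

end MonoEdgeSearch

def HasMonoSolution {κ : Type*} (k N : ℕ) (χ : ℕ → κ) : Prop :=
  ∃ (x : Fin k → ℕ) (z : ℕ), (∀ i, 1 ≤ x i ∧ x i ≤ N) ∧ 1 ≤ z ∧ z ≤ N ∧
    (∀ i, χ (x i) = χ z) ∧ ∑ i, x i ^ 2 = z ^ 2

theorem hasMonoSolution_of_list {κ : Type*} {k N z : ℕ} {χ : ℕ → κ} {xs : List ℕ}
    (hlen : xs.length = k) (hx : ∀ a ∈ xs, 1 ≤ a ∧ a ≤ N) (hz : 1 ≤ z ∧ z ≤ N)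
    (hsum : (xs.map (· ^ 2)).sum = z ^ 2) (hχ : ∀ a ∈ xs, χ a = χ z) :
    HasMonoSolution k N χ := by
  subst hlen
  refine ⟨fun i => xs[i], z, fun i => hx _ (List.getElem_mem _), hz.1, hz.2,
    fun i => hχ _ (List.getElem_mem _), ?_⟩
  rw [← hsum, ← List.ofFn_getElem_eq_map, List.sum_ofFn]
  rfl

def twelveSquareSolutions : List (List ℕ × ℕ) :=
  [([1, 1, 1, 1, 1, 1, 1, 1, 1, 3, 3, 3], 6),
   ([1, 1, 1, 1, 2, 2, 2, 2, 2, 2, 2, 2], 6),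
   ([1, 1, 1, 2, 2, 2, 2, 2, 2, 2, 3, 3], 7),
   ([1, 1, 1, 2, 2, 2, 2, 3, 3, 3, 3, 3], 8),
   ([2, 2, 2, 2, 2, 2, 2, 2, 2, 2, 2, 10], 12),
   ([2, 2, 2, 2, 2, 2, 2, 2, 2, 6, 6, 6], 12),
   ([1, 1, 1, 1, 1, 1, 1, 7, 7, 7, 7, 11], 18),
   ([1, 1, 1, 1, 2, 2, 2, 2, 2, 10, 10, 10], 18),
   ([1, 1, 1, 2, 2, 2, 7, 7, 7, 7, 7, 8], 18),
   ([1, 1, 1, 3, 3, 3, 7, 7, 7, 7, 7, 7], 18),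
   ([2, 2, 2, 2, 2, 2, 6, 6, 6, 8, 8, 8], 18),
   ([3, 3, 3, 3, 6, 6, 6, 6, 6, 6, 6, 6], 18),
   ([1, 1, 1, 1, 1, 1, 1, 1, 1, 8, 12, 12], 19),
   ([2, 2, 2, 2, 2, 3, 3, 3, 6, 6, 11, 11], 19),
   ([2, 2, 2, 2, 3, 3, 3, 3, 3, 10, 10, 10], 19),
   ([2, 2, 2, 3, 6, 6, 6, 6, 7, 7, 7, 7], 19),
   ([3, 3, 3, 3, 3, 6, 6, 6, 6, 6, 6, 10], 19),
   ([1, 1, 1, 1, 1, 1, 1, 6, 6, 10, 10, 11], 20),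
   ([1, 1, 1, 1, 6, 6, 6, 6, 6, 6, 6, 12], 20),
   ([1, 1, 1, 1, 6, 6, 7, 7, 7, 7, 8, 8], 20),
   ([1, 3, 3, 3, 3, 3, 3, 3, 8, 8, 8, 12], 20),
   ([2, 6, 6, 6, 6, 6, 6, 6, 6, 6, 6, 6], 20),
   ([3, 3, 3, 3, 3, 3, 3, 3, 8, 8, 10, 10], 20),
   ([1, 1, 1, 1, 1, 1, 1, 1, 1, 12, 12, 12], 21),
   ([1, 1, 1, 1, 1, 1, 1, 1, 2, 2, 8, 19], 21),
   ([1, 2, 2, 2, 2, 2, 2, 2, 2, 2, 2, 20], 21),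
   ([2, 6, 6, 6, 6, 6, 6, 6, 6, 6, 7, 8], 21),
   ([3, 3, 3, 3, 3, 3, 3, 6, 6, 8, 11, 11], 21),
   ([3, 3, 3, 6, 6, 6, 6, 6, 6, 7, 7, 10], 21),
   ([1, 1, 1, 1, 6, 6, 6, 6, 6, 10, 10, 10], 22),
   ([2, 2, 2, 3, 3, 3, 3, 3, 3, 3, 3, 20], 22),
   ([2, 2, 2, 3, 3, 3, 3, 3, 8, 11, 11, 11], 22),
   ([3, 3, 3, 3, 3, 3, 3, 3, 7, 11, 11, 11], 22),
   ([6, 6, 6, 6, 6, 6, 6, 6, 7, 7, 7, 7], 22),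
   ([1, 1, 1, 2, 2, 2, 2, 2, 2, 3, 3, 22], 23),
   ([6, 6, 6, 6, 6, 6, 6, 6, 7, 8, 8, 8], 23)]

theorem twelveSquareSolutions_valid :
    ∀ s ∈ twelveSquareSolutions, s.1.length = 12 ∧ (∀ a ∈ s.1, 1 ≤ a ∧ a ≤ 23) ∧
      (1 ≤ s.2 ∧ s.2 ≤ 23) ∧ (s.1.map (· ^ 2)).sum = s.2 ^ 2 := by
  decide

-- The vertex order only affects the size of the search tree (about 1100 nodes for this one).
theorem searchMonoEdge_twelveSquareSolutions :
    searchMonoEdge (twelveSquareSolutions.map fun s => s.2 :: s.1) [(0 : Fin 2), 1]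
      [6, 1, 3, 2, 18, 12, 10, 20, 22, 7, 8, 21, 11, 23, 19] (fun _ => none) = true := by
  decide +kernel

theorem hasMonoSolution_12_23 (χ : ℕ → Fin 2) : HasMonoSolution 12 23 χ := by
  obtain ⟨e, he, c, hc⟩ := exists_mono_of_searchMonoEdge (by decide) χ _ _
    (fun _ _ h => by simp at h) searchMonoEdge_twelveSquareSolutions
  obtain ⟨⟨xs, z⟩, hs, rfl⟩ := List.mem_map.1 he
  obtain ⟨hlen, hx, hz, hsum⟩ := twelveSquareSolutions_valid _ hs
  exact hasMonoSolution_of_list hlen hx hz hsum fun a ha =>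
    (hc a (List.mem_cons_of_mem _ ha)).trans (hc z List.mem_cons_self).symm

/-- Bit `s` is set iff `s` is a sum of `k` squares of entries of `A`. -/
def squareSumBits (A : List ℕ) : ℕ → ℕ
  | 0 => 1
  | k + 1 => A.foldr (fun a acc => acc ||| squareSumBits A k <<< a ^ 2) 0

theorem testBit_foldr_shiftLeft {S s : ℕ} {A : List ℕ} {f : ℕ → ℕ} {a : ℕ} (ha : a ∈ A)
    (hs : S.testBit s) : (A.foldr (fun a acc => acc ||| S <<< f a) 0).testBit (f a + s) := by
  induction A with
  | nil => cases ha
  | cons b A ih =>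
    rw [List.foldr_cons, Nat.testBit_or, Bool.or_eq_true_iff]
    rcases List.mem_cons.1 ha with rfl | ha
    · right
      simp [Nat.testBit_shiftLeft, hs]
    · exact Or.inl (ih ha)

theorem testBit_squareSumBits {A : List ℕ} {k : ℕ} (x : Fin k → ℕ) (hx : ∀ i, x i ∈ A) :
    (squareSumBits A k).testBit (∑ i, x i ^ 2) := by
  induction k with
  | zero => simp [squareSumBits]
  | succ k ih =>
    rw [Fin.sum_univ_succ]
    exact testBit_foldr_shiftLeft (hx 0) (ih _ fun i => hx i.succ)

def colorClass {κ : Type*} [DecidableEq κ] (χ : ℕ → κ) (N : ℕ) (c : κ) : List ℕ :=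
  (List.range' 1 N).filter fun n => χ n = c

theorem not_hasMonoSolution_of_testBit {κ : Type*} [DecidableEq κ] {k N : ℕ} {χ : ℕ → κ}
    (h : ∀ z ∈ List.range' 1 N, (squareSumBits (colorClass χ N (χ z)) k).testBit (z ^ 2) = false) :
    ¬ HasMonoSolution k N χ := by
  rintro ⟨x, z, hx, hz1, hzN, hχ, hsum⟩
  have hxA : ∀ i, x i ∈ colorClass χ N (χ z) := fun i => by
    simp only [colorClass, List.mem_filter, List.mem_range'_1, decide_eq_true_eq]
    exact ⟨⟨(hx i).1, by have := (hx i).2; omega⟩, hχ i⟩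
  have hbit := testBit_squareSumBits x hxA
  rw [hsum, h z (List.mem_range'_1.2 ⟨hz1, by omega⟩)] at hbit
  exact Bool.false_ne_true hbit

def extremalColoring (n : ℕ) : Fin 2 := if n ∈ [1, 2, 3, 4, 5, 16, 22] then 0 else 1

theorem not_hasMonoSolution_extremalColoring : ¬ HasMonoSolution 12 22 extremalColoring :=
  not_hasMonoSolution_of_testBit (by decide +kernel)

/-- The 2-color Rado number of `x₁² + ⋯ + x_12² = z²` equals 23: every 2-coloring of
`{1, …, 23}` admits a monochromatic solution, and there exists a 2-coloring of
`{1, …, 22}` with no monochromatic solution. -/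
theorem rado_number_two_colors_sum_12_squares_eq_square :
    (∀ χ : ℕ → Fin 2, ∃ (x : Fin 12 → ℕ) (z : ℕ),
      (∀ i, 1 ≤ x i ∧ x i ≤ 23) ∧ 1 ≤ z ∧ z ≤ 23 ∧
      (∀ i, χ (x i) = χ z) ∧ (∑ i, (x i) ^ 2) = z ^ 2) ∧
    (∃ χ : ℕ → Fin 2, ¬ ∃ (x : Fin 12 → ℕ) (z : ℕ),
      (∀ i, 1 ≤ x i ∧ x i ≤ 22) ∧ 1 ≤ z ∧ z ≤ 22 ∧
      (∀ i, χ (x i) = χ z) ∧ (∑ i, (x i) ^ 2) = z ^ 2) :=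
  ⟨hasMonoSolution_12_23, extremalColoring, not_hasMonoSolution_extremalColoring⟩
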